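/- arXiv:1503.00500 — 3 statements merged into one kernel-verified Lean document; each statement's English description precedes it below -/
import Mathlib

section
/- Pathwise iterated Azéma–Yor inequality: Let x : [0,1] → ℝ be a càdlàg path with running maximum x*_t := sup_{0≤s≤t} x_s. Then for every m > x_0 and reals ζ₁ ≤ ζ₂ ≤ … ≤ ζₙ < m, and time points 0 ≤ t₁ < … < tₙ ≤ 1: 1_{x*_{tₙ} ≥ m} ≤ Σ_{i=1}^{n} [ (x_{tᵢ} − ζᵢ)⁺/(m − ζᵢ) + 1_{x*_{t_{i−1}} < m ≤ x*_{tᵢ}} · (m − x_{tᵢ})/(m − ζᵢ) ] − Σ_{i=1}^{n−1} [ (x_{tᵢ} − ζ_{i+1})⁺/(m − ζ_{i+1}) + 1_{m ≤ x*_{tᵢ}, ζ_{i+1} ≤ x_{tᵢ}} · (x_{t_{i+1}} − x_{tᵢ})/(m − ζ_{i+1}) ]. -/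
open Set Filter Topology

/-!
Along the grid `t₁ < ⋯ < tₙ` write `aₖ = x_{tₖ}` and `Mₖ = x*_{tₖ}`. The right-hand side
(`azemaYorBound`), cut off after `k` periods, dominates the value `Vₖ` (`azemaYorValue`) of the
hedge that holds one unit of cash once the level `m` has been reached and
`(aₖ - ζₖ)⁺ / (m - ζₖ)` otherwise. Passing from `k` to `k + 1` is a three-case check (level
reached before `tₖ`, between `tₖ` and `tₖ₊₁`, or not yet), using that `ζ ↦ (a - ζ)⁺ / (m - ζ)`
is antitone when `a < m`. Since `Vₙ ≥ 1_{Mₙ ≥ m}`, this gives the inequality. Local boundedness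
of a càdlàg path makes the running maximum a genuine supremum.
-/

section Cadlag

variable {x : ℝ → ℝ}

lemma isBoundedUnder_le_nhds_of_cadlag {u : ℝ} (hr : ContinuousWithinAt x (Ici u) u)
    (hl : ∃ l, Tendsto x (𝓝[<] u) (𝓝 l)) : IsBoundedUnder (· ≤ ·) (𝓝 u) x := by
  obtain ⟨l, hl⟩ := hl
  rw [← nhdsLT_sup_nhdsGE, IsBoundedUnder, Filter.map_sup]
  exact isBounded_sup hl.isBoundedUnder_le hr.isBoundedUnder_le

lemma bddAbove_image_Icc_of_cadlag (hr : ∀ t, ContinuousWithinAt x (Ici t) t)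
    (hl : ∀ t : ℝ, 0 < t → ∃ l, Tendsto x (𝓝[<] t) (𝓝 l)) (T : ℝ) :
    BddAbove (x '' Icc 0 T) := by
  have hloc : ∀ u ∈ Icc 0 T, IsBoundedUnder (· ≤ ·) (𝓝[Icc 0 T] u) x := by
    intro u hu
    rcases hu.1.lt_or_eq with hu0 | rfl
    · exact (isBoundedUnder_le_nhds_of_cadlag (hr u) (hl u hu0)).mono nhdsWithin_le_nhds
    · exact (hr 0).isBoundedUnder_le.mono (nhdsWithin_mono _ fun s hs => hs.1)
  refine isCompact_Icc.induction_on (p := fun s => BddAbove (x '' s)) (by simp)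
    (fun s s' hss' h => h.mono (image_mono hss')) (fun s s' h h' => by
      rw [image_union]; exact h.union h') fun u hu => ?_
  obtain ⟨C, hC⟩ := hloc u hu
  exact ⟨{s | x s ≤ C}, hC, C, forall_mem_image.2 fun _ hs => hs⟩

end Cadlag

section AzemaYor

variable {m ζ ζ' a b M M' : ℝ}

noncomputable def scaledCall (m ζ a : ℝ) : ℝ := max (a - ζ) 0 / (m - ζ)

noncomputable def azemaYorValue (m ζ M a : ℝ) : ℝ := if m ≤ M then 1 else scaledCall m ζ a

lemma scaledCall_nonneg (hζ : ζ < m) : 0 ≤ scaledCall m ζ a :=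
  div_nonneg (le_max_right _ _) (sub_nonneg.2 hζ.le)

lemma scaledCall_le_scaledCall (ha : a < m) (hζζ' : ζ ≤ ζ') (hζ' : ζ' < m) :
    scaledCall m ζ' a ≤ scaledCall m ζ a := by
  unfold scaledCall
  rcases le_or_gt a ζ' with h | h
  · rw [max_eq_right (by linarith), zero_div]
    exact scaledCall_nonneg (hζζ'.trans_lt hζ')
  · rw [max_eq_left (by linarith), max_eq_left (by linarith),
      div_le_div_iff₀ (by linarith) (by linarith)]
    nlinarith

lemma one_le_scaledCall_add (hζ : ζ < m) : 1 ≤ scaledCall m ζ a + (m - a) / (m - ζ) := by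
  rw [scaledCall, ← add_div, one_le_div (by linarith)]
  linarith [le_max_left (a - ζ) 0]

lemma scaledCall_add_le (hζ : ζ < m) (hζa : ζ ≤ a) :
    scaledCall m ζ a + (b - a) / (m - ζ) ≤ scaledCall m ζ b := by
  rw [scaledCall, scaledCall, max_eq_left (by linarith), ← add_div]
  exact div_le_div_of_nonneg_right (by linarith [le_max_left (b - ζ) 0]) (by linarith)

lemma azemaYorValue_le_azemaYorValue (haM : a ≤ M) (hζζ' : ζ ≤ ζ') (hζ' : ζ' < m) :
    azemaYorValue m ζ' M a ≤ azemaYorValue m ζ M a := by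
  unfold azemaYorValue
  split_ifs with hM
  · exact le_rfl
  · exact scaledCall_le_scaledCall (haM.trans_lt (not_le.1 hM)) hζζ' hζ'

lemma indicator_le_azemaYorValue (hζ : ζ < m) :
    (if m ≤ M then (1 : ℝ) else 0) ≤ azemaYorValue m ζ M a := by
  unfold azemaYorValue
  split_ifs
  · exact le_rfl
  · exact scaledCall_nonneg hζ

lemma azemaYorValue_le_add_sub (hζ : ζ < m) (hMM' : M ≤ M') :
    azemaYorValue m ζ M' b ≤ azemaYorValue m ζ M a
      + (scaledCall m ζ b + if M < m ∧ m ≤ M' then (m - b) / (m - ζ) else 0)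
      - (scaledCall m ζ a + if m ≤ M ∧ ζ ≤ a then (b - a) / (m - ζ) else 0) := by
  unfold azemaYorValue
  by_cases hM : m ≤ M
  · have hb := scaledCall_nonneg (a := b) hζ
    by_cases hζa : ζ ≤ a
    · simp only [hM, hM.trans hMM', hζa, if_true, and_true, not_lt.2 hM, if_false]
      linarith [scaledCall_add_le (b := b) hζ hζa]
    · have ha : scaledCall m ζ a = 0 := by
        rw [scaledCall, max_eq_right (by linarith), zero_div]
      simp only [hM, hM.trans hMM', hζa, if_true, and_false, not_lt.2 hM, false_and, if_false,
        ha]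
      linarith
  · by_cases hM' : m ≤ M'
    · simp only [hM, hM', not_le.1 hM, and_self, false_and, if_true, if_false]
      linarith [one_le_scaledCall_add (a := b) hζ]
    · simp only [hM, hM', and_false, false_and, if_false]
      linarith

end AzemaYor

section Sequence

variable {m : ℝ} {a M ζ : ℕ → ℝ} {n : ℕ}

noncomputable def azemaYorBound (m : ℝ) (a M ζ : ℕ → ℝ) (n : ℕ) : ℝ :=
  (∑ i ∈ Finset.Icc 1 n,
      (scaledCall m (ζ i) (a i) + if M (i - 1) < m ∧ m ≤ M i then (m - a i) / (m - ζ i) else 0))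
    - ∑ i ∈ Finset.Icc 1 (n - 1),
      (scaledCall m (ζ (i + 1)) (a i)
        + if m ≤ M i ∧ ζ (i + 1) ≤ a i then (a (i + 1) - a i) / (m - ζ (i + 1)) else 0)

lemma azemaYorBound_one :
    azemaYorBound m a M ζ 1
      = scaledCall m (ζ 1) (a 1) + if M 0 < m ∧ m ≤ M 1 then (m - a 1) / (m - ζ 1) else 0 := by
  simp [azemaYorBound]

lemma azemaYorBound_succ_succ (k : ℕ) :
    azemaYorBound m a M ζ (k + 2) = azemaYorBound m a M ζ (k + 1)
      + (scaledCall m (ζ (k + 2)) (a (k + 2))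
          + if M (k + 1) < m ∧ m ≤ M (k + 2) then (m - a (k + 2)) / (m - ζ (k + 2)) else 0)
      - (scaledCall m (ζ (k + 2)) (a (k + 1))
          + if m ≤ M (k + 1) ∧ ζ (k + 2) ≤ a (k + 1)
            then (a (k + 2) - a (k + 1)) / (m - ζ (k + 2)) else 0) := by
  simp only [azemaYorBound, (by omega : k + 2 - 1 = k + 1), Nat.add_sub_cancel,
    Finset.sum_Icc_succ_top (by omega : 1 ≤ k + 2),
    Finset.sum_Icc_succ_top (by omega : 1 ≤ k + 1)]
  ring

lemma azemaYorValue_le_azemaYorBound (hM0 : M 0 < m) (hM : ∀ k < n, M k ≤ M (k + 1))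
    (haM : ∀ k < n, a k ≤ M k) (hζ_mono : ∀ k, 1 ≤ k → k < n → ζ k ≤ ζ (k + 1))
    (hζ_lt : ∀ k, 1 ≤ k → k ≤ n → ζ k < m) (k : ℕ) (hk : k + 1 ≤ n) :
    azemaYorValue m (ζ (k + 1)) (M (k + 1)) (a (k + 1)) ≤ azemaYorBound m a M ζ (k + 1) := by
  induction k with
  | zero =>
    rw [zero_add] at hk ⊢
    have hstep := azemaYorValue_le_add_sub (a := a 0) (b := a 1) (hζ_lt 1 le_rfl hk) (hM 0 hk)
    have hV0 : azemaYorValue m (ζ 1) (M 0) (a 0) = scaledCall m (ζ 1) (a 0) :=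
      if_neg (not_le.2 hM0)
    simp only [not_le.2 hM0, false_and, if_false] at hstep
    rw [azemaYorBound_one]
    linarith
  | succ k ih =>
    have hstep := azemaYorValue_le_add_sub (a := a (k + 1)) (b := a (k + 2))
      (hζ_lt (k + 2) (by omega) hk) (hM _ hk)
    have hanti := azemaYorValue_le_azemaYorValue (haM (k + 1) hk) (hζ_mono (k + 1) (by omega) hk)
      (hζ_lt (k + 2) (by omega) hk)
    rw [azemaYorBound_succ_succ]
    linarith [ih (by omega)]

lemma indicator_le_azemaYorBound (hM0 : M 0 < m) (hM : ∀ k < n, M k ≤ M (k + 1))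
    (haM : ∀ k < n, a k ≤ M k) (hζ_mono : ∀ k, 1 ≤ k → k < n → ζ k ≤ ζ (k + 1))
    (hζ_lt : ∀ k, 1 ≤ k → k ≤ n → ζ k < m) :
    (if m ≤ M n then (1 : ℝ) else 0) ≤ azemaYorBound m a M ζ n := by
  rcases n with _ | k
  · simp [azemaYorBound, not_le.2 hM0]
  · exact (indicator_le_azemaYorValue (hζ_lt _ (by omega) le_rfl)).trans
      (azemaYorValue_le_azemaYorBound hM0 hM haM hζ_mono hζ_lt k le_rfl)

end Sequence

theorem stmt_3_general
    (x : ℝ → ℝ)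
    (hx_rc : ∀ t, ContinuousWithinAt x (Set.Ici t) t)
    (hx_ll : ∀ t : ℝ, 0 < t → ∃ l : ℝ, Tendsto x (nhdsWithin t (Set.Iio t)) (nhds l))
    (n : ℕ)
    (t : ℕ → ℝ) (ht0 : t 0 = 0)
    (htm : ∀ i j : ℕ, i < j → j ≤ n → t i < t j)
    (m : ℝ) (hm : x 0 < m)
    (ζ : ℕ → ℝ)
    (hζmono : ∀ i j : ℕ, 1 ≤ i → i ≤ j → j ≤ n → ζ i ≤ ζ j)
    (hζlt : ∀ i : ℕ, 1 ≤ i → i ≤ n → ζ i < m) :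
    (if m ≤ sSup (x '' Set.Icc 0 (t n)) then (1:ℝ) else 0) ≤
      (∑ i ∈ Finset.Icc 1 n,
        (max (x (t i) - ζ i) 0 / (m - ζ i)
          + (if sSup (x '' Set.Icc 0 (t (i-1))) < m ∧ m ≤ sSup (x '' Set.Icc 0 (t i))
              then (m - x (t i)) / (m - ζ i) else 0)))
      - (∑ i ∈ Finset.Icc 1 (n-1),
        (max (x (t i) - ζ (i+1)) 0 / (m - ζ (i+1))
          + (if m ≤ sSup (x '' Set.Icc 0 (t i)) ∧ ζ (i+1) ≤ x (t i)
              then (x (t (i+1)) - x (t i)) / (m - ζ (i+1)) else 0))) := by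
  have hbdd := bddAbove_image_Icc_of_cadlag hx_rc hx_ll
  have ht_nonneg : ∀ k ≤ n, 0 ≤ t k := by
    rintro (_ | k) hk
    · exact ht0.ge
    · exact ht0 ▸ (htm 0 (k + 1) k.succ_pos hk).le
  have hmax_mono : ∀ k < n, sSup (x '' Icc 0 (t k)) ≤ sSup (x '' Icc 0 (t (k + 1))) := fun k hk =>
    csSup_le_csSup (hbdd _) ((nonempty_Icc.2 (ht_nonneg k hk.le)).image x)
      (image_mono (Icc_subset_Icc_right (htm k (k + 1) k.lt_succ_self hk).le))
  refine indicator_le_azemaYorBound (a := fun k => x (t k))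
    (M := fun k => sSup (x '' Icc 0 (t k))) ?_ hmax_mono
    (fun k hk => le_csSup (hbdd _) (mem_image_of_mem x ⟨ht_nonneg k hk.le, le_rfl⟩))
    (fun k hk hkn => hζmono k (k + 1) hk k.le_succ hkn) hζlt
  simpa [ht0] using hm

/-- Pathwise iterated Azéma–Yor inequality: for a càdlàg path `x` on `[0,1]` with running
maximum `x*_t = sup_{0 ≤ s ≤ t} x_s`, every `m > x 0`, nondecreasing levels
`ζ₁ ≤ … ≤ ζₙ < m` and times `0 = t₀ < t₁ < … < tₙ ≤ 1`, one has the pathwise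
super-replication inequality for the indicator `1_{x*_{tₙ} ≥ m}`. -/
theorem stmt_3
    (x : ℝ → ℝ)
    (hx_rc : ∀ t, ContinuousWithinAt x (Set.Ici t) t)
    (hx_ll : ∀ t : ℝ, 0 < t → ∃ l : ℝ, Tendsto x (nhdsWithin t (Set.Iio t)) (nhds l))
    (n : ℕ) (hn : 1 ≤ n)
    (t : ℕ → ℝ) (ht0 : t 0 = 0)
    (htm : ∀ i j : ℕ, i < j → j ≤ n → t i < t j) (htn : t n ≤ 1)
    (m : ℝ) (hm : x 0 < m)
    (ζ : ℕ → ℝ)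
    (hζmono : ∀ i j : ℕ, 1 ≤ i → i ≤ j → j ≤ n → ζ i ≤ ζ j)
    (hζlt : ∀ i : ℕ, 1 ≤ i → i ≤ n → ζ i < m) :
    (if m ≤ sSup (x '' Set.Icc 0 (t n)) then (1:ℝ) else 0) ≤
      (∑ i ∈ Finset.Icc 1 n,
        (max (x (t i) - ζ i) 0 / (m - ζ i)
          + (if sSup (x '' Set.Icc 0 (t (i-1))) < m ∧ m ≤ sSup (x '' Set.Icc 0 (t i))
              then (m - x (t i)) / (m - ζ i) else 0)))
      - (∑ i ∈ Finset.Icc 1 (n-1),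
        (max (x (t i) - ζ (i+1)) 0 / (m - ζ (i+1))
          + (if m ≤ sSup (x '' Set.Icc 0 (t i)) ∧ ζ (i+1) ≤ x (t i)
              then (x (t (i+1)) - x (t i)) / (m - ζ (i+1)) else 0))) :=
  stmt_3_general x hx_rc hx_ll n t ht0 htm m hm ζ hζmono hζlt
end

section
/- Monotonicity and convergence of discretized values: Let c : [0,1] × ℝ → ℝ be C¹ in t with ∂ₜc continuous and ∂ₜc ≥ 0, and fix m > 0. For a partition π_n : 0 = t₀ < t₁ < … < t_n = 1, define C_n(m) := inf over ζ₁ ≤ … ≤ ζ_n ≤ m of Σ_{i=1}^n [ c(tᵢ,ζᵢ)/(m−ζᵢ) − 1_{i<n} c(tᵢ,ζ_{i+1})/(m−ζ_{i+1}) ]. For step functions ζ ∈ V_l⁺ constant on each (t_{i−1}, tᵢ], the functional Ψ_m(ζ) := c(0,ζ₀)/(m−ζ₀) + ∫₀¹ ∂ₜc(s,ζ_s)/(m−ζ_s) ds equals Σ_{i=0}^n [ c(tᵢ,ζ_{tᵢ})/(m−ζ_{tᵢ}) − 1_{i<n} c(tᵢ,ζ_{t_{i+1}})/(m−ζ_{t_{i+1}})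 ], and consequently C_n(m) ≥ C(m) := inf_{ζ ∈ V_l⁺, ζ ≤ m} Ψ_m(ζ). -/
/-!
On a cell `(tᵢ₋₁, tᵢ]` of the partition a step control is constant, equal to `x = ζ(tᵢ)`, so by the
fundamental theorem of calculus the integral of `∂ₜc(s, x)/(m − x)` over the cell is
`(c(tᵢ, x) − c(tᵢ₋₁, x))/(m − x)`; adding the cells gives the telescoping formula for `Ψ_m`.
Conversely, every admissible discrete vector `z₁ ≤ ⋯ ≤ zₙ ≤ m` is the sample of the left-continuous
step control equal to `zᵢ` on `(tᵢ₋₁, tᵢ]` (and to `z₁` at `0`), whose `Ψ_m` is the discrete sum.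
Hence every discrete value is a value of `Ψ_m`, which is nonnegative, and `C_n(m) ≥ C(m)`.
-/

open Set Filter MeasureTheory intervalIntegral

/-- The full-marginal cost functional `Ψ_m(ζ) = c(0,ζ₀)/(m−ζ₀) + ∫₀¹ ∂ₜc(s,ζ_s)/(m−ζ_s) ds`. -/
noncomputable def Psi (c c' : ℝ → ℝ → ℝ) (m : ℝ) (ζ : ℝ → ℝ) : ℝ :=
  c 0 (ζ 0) / (m - ζ 0) + ∫ s in (0:ℝ)..1, c' s (ζ s) / (m - ζ s)

/-- Admissible controls: non-decreasing, left-continuous (càglàd) functions on `[0,1]`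
bounded above by `m`. -/
def Adm (m : ℝ) (ζ : ℝ → ℝ) : Prop :=
  MonotoneOn ζ (Set.Icc 0 1) ∧
    (∀ t ∈ Set.Ioc (0:ℝ) 1, ContinuousWithinAt ζ (Set.Iic t) t) ∧
    (∀ t ∈ Set.Icc (0:ℝ) 1, ζ t ≤ m)

theorem integral_div_of_eqOn_Ioc {c c' : ℝ → ℝ → ℝ} {ζ : ℝ → ℝ} {m a b x : ℝ} (hab : a ≤ b)
    (hζ : EqOn ζ (fun _ => x) (Ioc a b))
    (hderiv : ∀ s ∈ Icc a b, HasDerivAt (fun u => c u x) (c' s x) s)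
    (hcont : ContinuousOn (fun s => c' s x) (Icc a b)) :
    IntervalIntegrable (fun s => c' s (ζ s) / (m - ζ s)) volume a b ∧
      ∫ s in a..b, c' s (ζ s) / (m - ζ s) = c b x / (m - x) - c a x / (m - x) := by
  have hintegrand :
      EqOn (fun s => c' s x / (m - x)) (fun s => c' s (ζ s) / (m - ζ s)) (uIoc a b) := by
    intro s hs
    rw [uIoc_of_le hab] at hs
    simp only [hζ hs]
  rw [← uIcc_of_le hab] at hderiv hcont
  refine ⟨(hcont.div_const _).intervalIntegrable.congr hintegrand, ?_⟩
  rw [integral_congr_ae (Eventually.of_forall fun s hs => (hintegrand hs).symm),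
    intervalIntegral.integral_div, integral_eq_sub_of_hasDerivAt hderiv hcont.intervalIntegrable, sub_div]

theorem sum_range_succ_sub_ite {M : Type*} [AddCommGroup M] (F G : ℕ → M) (n : ℕ) :
    ∑ i ∈ Finset.range (n+1), (F i - if i < n then G i else 0)
      = F 0 + ∑ k ∈ Finset.range n, (F (k+1) - G k) := by
  rw [Finset.sum_sub_distrib, Finset.sum_sub_distrib, ← add_sub_assoc, add_comm (F 0),
    ← Finset.sum_range_succ' F, Finset.sum_range_succ (fun i => if i < n then G i else 0),
    if_neg n.lt_irrefl, add_zero]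
  congr 1
  exact Finset.sum_congr rfl fun i hi => if_pos (Finset.mem_range.mp hi)

noncomputable def discreteSummand (c : ℝ → ℝ → ℝ) (m : ℝ) (n : ℕ) (t w : ℕ → ℝ) (i : ℕ) : ℝ :=
  c (t i) (w i) / (m - w i) - if i < n then c (t i) (w (i+1)) / (m - w (i+1)) else 0

theorem psi_eq_sum_discreteSummand {c c' : ℝ → ℝ → ℝ} {m : ℝ} {n : ℕ} {t : ℕ → ℝ}
    {ζ : ℝ → ℝ}
    (hderiv : ∀ x : ℝ, ∀ s ∈ Icc (0:ℝ) 1, HasDerivAt (fun u => c u x) (c' s x) s)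
    (hc'cont : ContinuousOn (fun p : ℝ × ℝ => c' p.1 p.2) (Icc 0 1 ×ˢ univ))
    (ht0 : t 0 = 0) (htn : t n = 1) (ht : MonotoneOn t (Iic n))
    (hstep : ∀ i ∈ Finset.Icc 1 n, ∀ s ∈ Ioc (t (i-1)) (t i), ζ s = ζ (t i)) :
    Psi c c' m ζ = ∑ i ∈ Finset.range (n+1), discreteSummand c m n t (ζ ∘ t) i := by
  have hcell : ∀ k < n,
      IntervalIntegrable (fun s => c' s (ζ s) / (m - ζ s)) volume (t k) (t (k+1)) ∧
      ∫ s in t k..t (k+1), c' s (ζ s) / (m - ζ s)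
        = c (t (k+1)) (ζ (t (k+1))) / (m - ζ (t (k+1)))
          - c (t k) (ζ (t (k+1))) / (m - ζ (t (k+1))) := by
    intro k hk
    have hcell_sub : Icc (t k) (t (k+1)) ⊆ Icc 0 1 := by
      rw [← ht0, ← htn]
      exact Icc_subset_Icc (ht (Nat.zero_le n) hk.le k.zero_le) (ht hk (le_refl n) hk)
    refine integral_div_of_eqOn_Ioc (ht hk.le hk k.le_succ)
      (fun s hs => hstep (k+1) (Finset.mem_Icc.mpr ⟨Nat.le_add_left 1 k, hk⟩) s hs)
      (fun s hs => hderiv _ s (hcell_sub hs)) ?_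
    exact hc'cont.comp (continuous_id.prodMk continuous_const).continuousOn
      fun s hs => ⟨hcell_sub hs, mem_univ _⟩
  have hintegral := sum_integral_adjacent_intervals fun k hk => (hcell k hk).1
  rw [ht0, htn, Finset.sum_congr rfl fun k hk => (hcell k (Finset.mem_range.mp hk)).2] at hintegral
  rw [Psi, ← hintegral, ← ht0]
  exact (sum_range_succ_sub_ite (fun i => c (t i) (ζ (t i)) / (m - ζ (t i)))
    (fun i => c (t i) (ζ (t (i+1))) / (m - ζ (t (i+1)))) n).symm

theorem psi_nonneg {c c' : ℝ → ℝ → ℝ} {m : ℝ} {ζ : ℝ → ℝ}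
    (hpos : ∀ x, 0 ≤ c 0 x) (hc'pos : ∀ t ∈ Icc (0:ℝ) 1, ∀ x, 0 ≤ c' t x)
    (hζ : ∀ t ∈ Icc (0:ℝ) 1, ζ t ≤ m) :
    0 ≤ Psi c c' m ζ := by
  refine add_nonneg (div_nonneg (hpos _) (sub_nonneg.mpr (hζ 0 ⟨le_rfl, zero_le_one⟩))) ?_
  exact integral_nonneg zero_le_one fun s hs =>
    div_nonneg (hc'pos s hs _) (sub_nonneg.mpr (hζ s hs))

-- `i` on the cell `(tᵢ₋₁, tᵢ]`, and `1` resp. `n` to the left resp. right of `(t₀, tₙ]`.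
noncomputable def stepIndex (t : ℕ → ℝ) (n : ℕ) (s : ℝ) : ℕ :=
  1 + ((Finset.Ico 1 n).filter (t · < s)).card

section stepIndex

variable {t : ℕ → ℝ} {n : ℕ}

theorem one_le_stepIndex (s : ℝ) : 1 ≤ stepIndex t n s := Nat.le_add_right 1 _

theorem stepIndex_le (hn : 1 ≤ n) (s : ℝ) : stepIndex t n s ≤ n := by
  have := (Finset.card_filter_le (Finset.Ico 1 n) (t · < s)).trans (Nat.card_Ico 1 n).le
  unfold stepIndex
  omega

theorem stepIndex_mono : Monotone (stepIndex t n) := fun _ _ hss' =>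
  Nat.add_le_add_left (Finset.card_le_card <| Finset.monotone_filter_right _
    fun _ _ hi => hi.trans_le hss') 1

theorem stepIndex_eq (ht : StrictMonoOn t (Iic n)) {j : ℕ} (hj : j ∈ Finset.Icc 1 n) {s : ℝ}
    (hs : s ∈ Ioc (t (j-1)) (t j)) : stepIndex t n s = j := by
  obtain ⟨hj1, hjn⟩ := Finset.mem_Icc.mp hj
  have hfilter : (Finset.Ico 1 n).filter (t · < s) = Finset.Ico 1 j := by
    ext i
    simp only [Finset.mem_filter, Finset.mem_Ico]
    constructor
    · rintro ⟨⟨hi1, hin⟩, hti⟩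
      refine ⟨hi1, lt_of_not_ge fun hji => ?_⟩
      exact (hs.2.trans (ht.monotoneOn hjn hin.le hji)).not_gt hti
    · rintro ⟨hi1, hij⟩
      refine ⟨⟨hi1, by omega⟩, lt_of_le_of_lt ?_ hs.1⟩
      exact ht.monotoneOn (show i ≤ n by omega) (show j - 1 ≤ n by omega) (by omega)
  rw [stepIndex, hfilter, Nat.card_Ico]
  omega

theorem stepIndex_apply (ht : StrictMonoOn t (Iic n)) {i : ℕ} (hi : i ∈ Finset.Icc 1 n) :
    stepIndex t n (t i) = i := by
  obtain ⟨hi1, hin⟩ := Finset.mem_Icc.mp hi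
  exact stepIndex_eq ht hi ⟨ht (show i - 1 ≤ n by omega) hin (by omega), le_rfl⟩

theorem stepIndex_eq_one (ht : MonotoneOn t (Iic n)) {s : ℝ} (hs : s ≤ t 1) :
    stepIndex t n s = 1 := by
  have hfilter : (Finset.Ico 1 n).filter (t · < s) = ∅ := by
    refine Finset.filter_false_of_mem fun i hi => ?_
    obtain ⟨hi1, hin⟩ := Finset.mem_Ico.mp hi
    exact (hs.trans (ht (show 1 ≤ n by omega) hin.le hi1)).not_gt
  rw [stepIndex, hfilter, Finset.card_empty]

theorem exists_mem_Ioc_of_mem_Ioc {s : ℝ} (hs : s ∈ Ioc (t 0) (t n)) :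
    ∃ j ∈ Finset.Icc 1 n, s ∈ Ioc (t (j-1)) (t j) := by
  classical
  have hex : ∃ j, s ≤ t j := ⟨n, hs.2⟩
  have hj0 : Nat.find hex ≠ 0 := fun h => (h ▸ Nat.find_spec hex).not_gt hs.1
  refine ⟨Nat.find hex, Finset.mem_Icc.mpr ⟨Nat.one_le_iff_ne_zero.mpr hj0, Nat.find_le hs.2⟩,
    lt_of_not_ge (Nat.find_min hex (by omega)), Nat.find_spec hex⟩

theorem continuousWithinAt_stepIndex (ht : StrictMonoOn t (Iic n)) {s : ℝ}
    (hs : s ∈ Ioc (t 0) (t n)) : ContinuousWithinAt (stepIndex t n) (Iic s) s := by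
  obtain ⟨j, hj, hsj⟩ := exists_mem_Ioc_of_mem_Ioc hs
  refine continuousWithinAt_const.congr_of_eventuallyEq ?_ (stepIndex_eq ht hj hsj)
  filter_upwards [Ioc_mem_nhdsLE hsj.1] with u hu
  exact stepIndex_eq ht hj ⟨hu.1, hu.2.trans hsj.2⟩

end stepIndex

theorem adm_comp_stepIndex {m : ℝ} {n : ℕ} {t z : ℕ → ℝ} (hn : 1 ≤ n)
    (ht0 : t 0 = 0) (htn : t n = 1) (ht : StrictMonoOn t (Iic n))
    (hz : MonotoneOn z (Icc 1 n)) (hzm : ∀ i ∈ Icc 1 n, z i ≤ m) :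
    Adm m (z ∘ stepIndex t n) := by
  have hmem : ∀ s, stepIndex t n s ∈ Icc 1 n := fun s => ⟨one_le_stepIndex s, stepIndex_le hn s⟩
  refine ⟨fun s _ s' _ hss' => hz (hmem s) (hmem s') (stepIndex_mono hss'), fun s hs => ?_,
    fun s _ => hzm _ (hmem s)⟩
  rw [← ht0, ← htn] at hs
  exact continuous_of_discreteTopology.continuousAt.comp_continuousWithinAt
    (continuousWithinAt_stepIndex ht hs)

theorem sum_range_discreteSummand_eq {c : ℝ → ℝ → ℝ} {m : ℝ} {n : ℕ} {t w z : ℕ → ℝ}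
    (hn : 1 ≤ n) (hw0 : w 0 = w 1) (hw : ∀ i ∈ Finset.Icc 1 n, w i = z i) :
    ∑ i ∈ Finset.range (n+1), discreteSummand c m n t w i
      = ∑ i ∈ Finset.Icc 1 n, discreteSummand c m n t z i := by
  have h0 : discreteSummand c m n t w 0 = 0 := by
    rw [discreteSummand, if_pos (Nat.lt_of_succ_le hn), zero_add, hw0, sub_self]
  rw [Finset.range_eq_Ico, Finset.sum_eq_sum_Ico_succ_bot (by omega : 0 < n + 1), h0, zero_add,
    zero_add, Finset.Ico_add_one_right_eq_Icc]
  refine Finset.sum_congr rfl fun i hi => ?_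
  rw [discreteSummand, discreteSummand, hw i hi]
  split_ifs with hin
  · rw [hw (i+1) (Finset.mem_Icc.mpr ⟨Nat.le_add_left 1 i, hin⟩)]
  · rfl

theorem psi_comp_stepIndex {c c' : ℝ → ℝ → ℝ} {m : ℝ} {n : ℕ} {t z : ℕ → ℝ}
    (hderiv : ∀ x : ℝ, ∀ s ∈ Icc (0:ℝ) 1, HasDerivAt (fun u => c u x) (c' s x) s)
    (hc'cont : ContinuousOn (fun p : ℝ × ℝ => c' p.1 p.2) (Icc 0 1 ×ˢ univ))
    (hn : 1 ≤ n) (ht0 : t 0 = 0) (htn : t n = 1) (ht : StrictMonoOn t (Iic n)) :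
    Psi c c' m (z ∘ stepIndex t n) = ∑ i ∈ Finset.Icc 1 n, discreteSummand c m n t z i := by
  have hstep : ∀ i ∈ Finset.Icc 1 n, ∀ s ∈ Ioc (t (i-1)) (t i),
      (z ∘ stepIndex t n) s = (z ∘ stepIndex t n) (t i) := fun i hi s hs =>
    congrArg z ((stepIndex_eq ht hi hs).trans (stepIndex_apply ht hi).symm)
  have ht01 : t 0 ≤ t 1 := ht.monotoneOn (Nat.zero_le n) hn zero_le_one
  rw [psi_eq_sum_discreteSummand hderiv hc'cont ht0 htn ht.monotoneOn hstep]
  refine sum_range_discreteSummand_eq hn ?_ fun i hi => congrArg z (stepIndex_apply ht hi)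
  simp only [Function.comp, stepIndex_eq_one ht.monotoneOn ht01,
    stepIndex_eq_one ht.monotoneOn le_rfl]

theorem stmt_8_general (c c' : ℝ → ℝ → ℝ)
    (hpos : ∀ t ∈ Set.Icc (0:ℝ) 1, ∀ x, 0 ≤ c t x)
    (hderiv : ∀ x : ℝ, ∀ t ∈ Set.Icc (0:ℝ) 1, HasDerivAt (fun u => c u x) (c' t x) t)
    (hc'cont : ContinuousOn (fun p : ℝ × ℝ => c' p.1 p.2) (Set.Icc 0 1 ×ˢ Set.univ))
    (hc'pos : ∀ t ∈ Set.Icc (0:ℝ) 1, ∀ x, 0 ≤ c' t x)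
    (m : ℝ)
    (n : ℕ) (hn : 1 ≤ n)
    (t : ℕ → ℝ) (ht0 : t 0 = 0) (htn : t n = 1)
    (htm : ∀ i j : ℕ, i < j → j ≤ n → t i < t j) :
    (∀ ζ : ℝ → ℝ, Adm m ζ →
        (∀ i ∈ Finset.Icc 1 n, ∀ s ∈ Set.Ioc (t (i-1)) (t i), ζ s = ζ (t i)) →
        Psi c c' m ζ =
          ∑ i ∈ Finset.range (n+1),
            (c (t i) (ζ (t i)) / (m - ζ (t i))
              - if i < n then c (t i) (ζ (t (i+1))) / (m - ζ (t (i+1))) else 0)) ∧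
    sInf {v : ℝ | ∃ z : ℕ → ℝ,
        (∀ i j : ℕ, 1 ≤ i → i ≤ j → j ≤ n → z i ≤ z j) ∧
        (∀ i : ℕ, 1 ≤ i → i ≤ n → z i ≤ m) ∧
        v = ∑ i ∈ Finset.Icc 1 n,
            (c (t i) (z i) / (m - z i)
              - if i < n then c (t i) (z (i+1)) / (m - z (i+1)) else 0)} ≥
      sInf {v : ℝ | ∃ ζ : ℝ → ℝ, Adm m ζ ∧ v = Psi c c' m ζ} := by
  have ht : StrictMonoOn t (Iic n) := fun i _ j hj hij => htm i j hij hj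
  refine ⟨fun ζ _ hstep => psi_eq_sum_discreteSummand hderiv hc'cont ht0 htn ht.monotoneOn hstep,
    le_csInf ⟨_, fun _ => m, fun _ _ _ _ _ => le_rfl, fun _ _ _ => le_rfl, rfl⟩ ?_⟩
  rintro _ ⟨z, hz, hzm, rfl⟩
  have hbdd : BddBelow {v | ∃ ζ, Adm m ζ ∧ v = Psi c c' m ζ} := by
    refine ⟨0, ?_⟩
    rintro _ ⟨ζ, hζ, rfl⟩
    exact psi_nonneg (hpos 0 ⟨le_rfl, zero_le_one⟩) hc'pos hζ.2.2
  have hadm : Adm m (z ∘ stepIndex t n) :=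
    adm_comp_stepIndex hn ht0 htn ht (fun i hi j hj hij => hz i j hi.1 hij hj.2)
      fun i hi => hzm i hi.1 hi.2
  calc sInf _ ≤ Psi c c' m (z ∘ stepIndex t n) := csInf_le hbdd ⟨_, hadm, rfl⟩
    _ = _ := psi_comp_stepIndex hderiv hc'cont hn ht0 htn ht

/-- For step functions `ζ` constant on each `(t_{i−1}, t_i]` of a partition of `[0,1]`, the
functional `Ψ_m(ζ)` equals the discrete telescoping sum
`Σ_{i=0}^n [ c(tᵢ,ζ_{tᵢ})/(m−ζ_{tᵢ}) − 1_{i<n} c(tᵢ,ζ_{t_{i+1}})/(m−ζ_{t_{i+1}}) ]`; and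
consequently the discrete value `C_n(m)` dominates the continuous one `C(m)`. -/
theorem stmt_8 (c c' : ℝ → ℝ → ℝ)
    (hconv : ∀ t ∈ Set.Icc (0:ℝ) 1, ConvexOn ℝ Set.univ (c t))
    (hanti : ∀ t ∈ Set.Icc (0:ℝ) 1, Antitone (c t))
    (hpos : ∀ t ∈ Set.Icc (0:ℝ) 1, ∀ x, 0 ≤ c t x)
    (hderiv : ∀ x : ℝ, ∀ t ∈ Set.Icc (0:ℝ) 1, HasDerivAt (fun u => c u x) (c' t x) t)
    (hc'cont : ContinuousOn (fun p : ℝ × ℝ => c' p.1 p.2) (Set.Icc 0 1 ×ˢ Set.univ))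
    (hc'pos : ∀ t ∈ Set.Icc (0:ℝ) 1, ∀ x, 0 ≤ c' t x)
    (m : ℝ) (hm : 0 < m)
    (n : ℕ) (hn : 1 ≤ n)
    (t : ℕ → ℝ) (ht0 : t 0 = 0) (htn : t n = 1)
    (htm : ∀ i j : ℕ, i < j → j ≤ n → t i < t j) :
    (∀ ζ : ℝ → ℝ, Adm m ζ →
        (∀ i ∈ Finset.Icc 1 n, ∀ s ∈ Set.Ioc (t (i-1)) (t i), ζ s = ζ (t i)) →
        Psi c c' m ζ =
          ∑ i ∈ Finset.range (n+1),
            (c (t i) (ζ (t i)) / (m - ζ (t i))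
              - if i < n then c (t i) (ζ (t (i+1))) / (m - ζ (t (i+1))) else 0)) ∧
    sInf {v : ℝ | ∃ z : ℕ → ℝ,
        (∀ i j : ℕ, 1 ≤ i → i ≤ j → j ≤ n → z i ≤ z j) ∧
        (∀ i : ℕ, 1 ≤ i → i ≤ n → z i ≤ m) ∧
        v = ∑ i ∈ Finset.Icc 1 n,
            (c (t i) (z i) / (m - z i)
              - if i < n then c (t i) (z (i+1)) / (m - z (i+1)) else 0)} ≥
      sInf {v : ℝ | ∃ ζ : ℝ → ℝ, Adm m ζ ∧ v = Psi c c' m ζ} :=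
  stmt_8_general c c' hpos hderiv hc'cont hc'pos m n hn t ht0 htn htm
end

section
/- Martingale inequality for the maximum (simple form): Let M be a right-continuous martingale on [0,1] with M₀ = 0, m > 0, and ζ₁ ≤ … ≤ ζ_n < m constants. Then P[max_{0≤t≤1} M_t ≥ m] ≤ Σ_{i=1}^n [ E[(M_{tᵢ} − ζᵢ)⁺]/(m − ζᵢ) − 1_{i<n} E[(M_{tᵢ} − ζ_{i+1})⁺]/(m − ζ_{i+1}) ] for any grid 0 ≤ t₁ < … < t_n = 1. -/
open Set Filter MeasureTheory Topology

lemma pos_compare {x c z1 z2 : ℝ} (hx : x < c) (hz : z1 ≤ z2) (h2 : z2 < c) :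
    max (x - z2) 0 * (c - z1) ≤ max (x - z1) 0 * (c - z2) := by
  rcases le_or_gt x z2 with h | h
  · rw [max_eq_right (by linarith)]
    have : 0 ≤ max (x - z1) 0 := le_max_right _ _
    nlinarith
  · rw [max_eq_left (by linarith), max_eq_left (by linarith)]
    nlinarith

section
variable {Ω : Type*} [m0 : MeasurableSpace Ω] {P : Measure Ω}
  [IsProbabilityMeasure P] {𝓕 : Filtration ℝ m0} {M : ℝ → Ω → ℝ}

def Bset (M : ℝ → Ω → ℝ) (G : Finset ℝ) (c u : ℝ) : Set Ω :=
  {ω | ∀ y ∈ G, y ≤ u → M y ω < c}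

lemma Bset_mble (hM : Adapted 𝓕 M) (G : Finset ℝ) (c : ℝ) {u v : ℝ} (huv : u ≤ v) :
    MeasurableSet[𝓕 v] (Bset M G c u) := by
  have h : Bset M G c u = ⋂ y ∈ (G.filter (fun y => y ≤ u)), {ω | M y ω < c} := by
    ext ω; simp [Bset, Finset.mem_filter]
  rw [h]
  refine MeasurableSet.biInter (G.filter _).countable_toSet (fun y hy => ?_)
  obtain ⟨hyG, hyu⟩ := Finset.mem_filter.mp hy
  exact 𝓕.mono (hyu.trans huv) _ ((hM y) measurableSet_Iio)


omit m0 in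
lemma Bset_anti (M : ℝ → Ω → ℝ) (G : Finset ℝ) (c : ℝ) {u v : ℝ} (huv : u ≤ v) :
    Bset M G c v ⊆ Bset M G c u :=
  fun ω hω y hy hyu => hω y hy (hyu.trans huv)

lemma crossing (hM : Martingale M 𝓕 P) (G : Finset ℝ) {c ζ u v : ℝ}
    (hζ : ζ < c) (huv : u ≤ v) :
    (c - ζ) * (P (Bset M G c u \ Bset M G c v)).toReal
      ≤ ∫ ω in Bset M G c u \ Bset M G c v, max (M v ω - ζ) 0 ∂P := by
  classical
  set Bu := Bset M G c u with hBu
  set Bv := Bset M G c v with hBv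
  set Gb := G.filter (fun x => u < x ∧ x ≤ v) with hGb
  set D : ℝ → Set Ω := fun x =>
    ({ω | c ≤ M x ω} ∩ ⋂ y ∈ G.filter (fun y => u < y ∧ y < x), {ω | M y ω < c}) ∩ Bu with hD
  have hmemGb : ∀ x, x ∈ Gb ↔ (x ∈ G ∧ u < x ∧ x ≤ v) := by
    intro x; rw [hGb, Finset.mem_filter]
  have hDm : ∀ x ∈ Gb, MeasurableSet[𝓕 x] (D x) := by
    intro x hx
    obtain ⟨hxG, hux, hxv⟩ := (hmemGb x).mp hx
    refine (MeasurableSet.inter ?_ ?_).inter ?_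
    · exact (hM.stronglyAdapted x).measurable measurableSet_Ici
    · refine MeasurableSet.biInter (Finset.countable_toSet _) fun y hy => ?_
      obtain ⟨hyG, huy, hyx⟩ := Finset.mem_filter.mp hy
      exact 𝓕.mono hyx.le _ ((hM.stronglyAdapted y).measurable measurableSet_Iio)
    · exact Bset_mble hM.stronglyAdapted.adapted G c hux.le
  have hDm0 : ∀ x ∈ Gb, MeasurableSet (D x) := fun x hx => 𝓕.le x _ (hDm x hx)
  have hposint : ∀ w : ℝ, Integrable (fun ω => max (M w ω - ζ) 0) P :=
    fun w => ((hM.integrable w).sub (integrable_const ζ)).pos_part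
  have hDsub : ∀ x ∈ Gb, ∀ ω ∈ D x, c ≤ M x ω := fun x _ ω hω => hω.1.1
  have hcover : Bu \ Bv = ⋃ x ∈ Gb, D x := by
    ext ω
    constructor
    · rintro ⟨hωu, hωv⟩
      have hex : ∃ y ∈ G, y ≤ v ∧ c ≤ M y ω := by
        by_contra hcon
        push_neg at hcon
        exact hωv fun y hy hyv => hcon y hy hyv
      set S := Gb.filter (fun y => c ≤ M y ω) with hS
      have hSne : S.Nonempty := by
        obtain ⟨y₀, hy₀G, hy₀v, hy₀c⟩ := hex
        have huy₀ : u < y₀ := by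
          by_contra hle
          exact absurd (hωu y₀ hy₀G (not_lt.mp hle)) (not_lt.mpr hy₀c)
        exact ⟨y₀, Finset.mem_filter.mpr ⟨(hmemGb y₀).mpr ⟨hy₀G, huy₀, hy₀v⟩, hy₀c⟩⟩
      set x := S.min' hSne with hx
      have hxS : x ∈ S := S.min'_mem hSne
      obtain ⟨hxGb, hxc⟩ := Finset.mem_filter.mp hxS
      refine mem_biUnion hxGb ⟨⟨hxc, ?_⟩, hωu⟩
      refine mem_biInter fun y hy => ?_
      obtain ⟨hyG, huy, hyx⟩ := Finset.mem_filter.mp hy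
      by_contra hcy
      have hymem : y ∈ S := Finset.mem_filter.mpr
        ⟨(hmemGb y).mpr ⟨hyG, huy, hyx.le.trans ((hmemGb x).mp hxGb).2.2⟩, not_lt.mp hcy⟩
      exact absurd (S.min'_le y hymem) (not_le.mpr hyx)
    · intro hω
      obtain ⟨x, hxGb, hωx⟩ := Set.mem_iUnion₂.mp hω
      obtain ⟨hxG, hux, hxv⟩ := (hmemGb x).mp hxGb
      exact ⟨hωx.2, fun hBvω => absurd (hBvω x hxG hxv) (not_lt.mpr hωx.1.1)⟩
  have hdisj : (↑Gb : Set ℝ).PairwiseDisjoint D := by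
    have key : ∀ x ∈ Gb, ∀ x' ∈ Gb, x < x' → Disjoint (D x) (D x') := by
      intro x hx x' hx' hlt
      rw [Set.disjoint_left]
      intro ω hωx hωx'
      have h1 : c ≤ M x ω := hωx.1.1
      have h2 : M x ω < c := by
        refine Set.mem_iInter₂.mp hωx'.1.2 x (Finset.mem_filter.mpr ⟨((hmemGb x).mp hx).1, ((hmemGb x).mp hx).2.1, hlt⟩)
      exact absurd h1 (not_le.mpr h2)
    intro x hx x' hx' hne
    rcases lt_or_gt_of_ne hne with h | h
    · exact key x hx x' hx' h
    · exact (key x' hx' x hx h).symm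
  -- measure identity
  have hmeas : P (Bu \ Bv) = ∑ x ∈ Gb, P (D x) := by
    rw [hcover, measure_biUnion_finset hdisj hDm0]
  have htm : (P (Bu \ Bv)).toReal = ∑ x ∈ Gb, (P (D x)).toReal := by
    rw [hmeas, ENNReal.toReal_sum fun x _ => measure_ne_top P _]
  rw [htm, Finset.mul_sum, hcover]
  rw [MeasureTheory.integral_biUnion_finset Gb hDm0 hdisj
    (fun x hx => (hposint v).integrableOn)]
  refine Finset.sum_le_sum fun x hx => ?_
  obtain ⟨hxG, hux, hxv⟩ := (hmemGb x).mp hx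
  have step1 : (c - ζ) * (P (D x)).toReal = ∫ ω in D x, (c - ζ) ∂P := by
    rw [setIntegral_const, smul_eq_mul, mul_comm, measureReal_def]
  have step2 : ∫ ω in D x, (c - ζ) ∂P ≤ ∫ ω in D x, (M x ω - ζ) ∂P := by
    refine setIntegral_mono_on (integrable_const _).integrableOn
      (((hM.integrable x).sub (integrable_const ζ)).integrableOn) (hDm0 x hx)
      fun ω hω => sub_le_sub_right (hDsub x hx ω hω) ζ
  have step3 : ∫ ω in D x, (M x ω - ζ) ∂P = ∫ ω in D x, (M v ω - ζ) ∂P := by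
    rw [integral_sub ((hM.integrable x).integrableOn) (integrable_const ζ).integrableOn,
      integral_sub ((hM.integrable v).integrableOn) (integrable_const ζ).integrableOn,
      hM.setIntegral_eq hxv (hDm x hx)]
  have step4 : ∫ ω in D x, (M v ω - ζ) ∂P ≤ ∫ ω in D x, max (M v ω - ζ) 0 ∂P := by
    refine setIntegral_mono_on (((hM.integrable v).sub (integrable_const ζ)).integrableOn)
      ((hposint v).integrableOn) (hDm0 x hx)
      fun ω _ => le_max_left _ _
  calc (c - ζ) * (P (D x)).toReal = ∫ ω in D x, (c - ζ) ∂P := step1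
    _ ≤ ∫ ω in D x, (M x ω - ζ) ∂P := step2
    _ = ∫ ω in D x, (M v ω - ζ) ∂P := step3
    _ ≤ ∫ ω in D x, max (M v ω - ζ) 0 ∂P := step4


lemma pospart_submartingale (hM : Martingale M 𝓕 P) (ζ : ℝ) :
    Submartingale (fun i ω => max (M i ω - ζ) 0) 𝓕 P := by
  have h := ((hM.sub (martingale_const 𝓕 P ζ)).submartingale).pos
  exact h

lemma pospart_setIntegral_le (hM : Martingale M 𝓕 P) {ζ u v : ℝ} (huv : u ≤ v)
    {s : Set Ω} (hs : MeasurableSet[𝓕 u] s) :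
    ∫ ω in s, max (M u ω - ζ) 0 ∂P ≤ ∫ ω in s, max (M v ω - ζ) 0 ∂P :=
  (pospart_submartingale hM ζ).setIntegral_le huv hs


lemma discrete (hM : Martingale M 𝓕 P) (c : ℝ)
    (n : ℕ) (hn : 1 ≤ n) (t : ℕ → ℝ) (ht1 : 0 ≤ t 1)
    (htm : ∀ i j : ℕ, i < j → j ≤ n → t i < t j)
    (ζ : ℕ → ℝ)
    (hζmono : ∀ i j : ℕ, 1 ≤ i → i ≤ j → j ≤ n → ζ i ≤ ζ j)
    (hζc : ∀ i : ℕ, 1 ≤ i → i ≤ n → ζ i < c)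
    (G : Finset ℝ) (hG0 : ∀ x ∈ G, 0 ≤ x) (hGn : ∀ x ∈ G, x ≤ t n)
    (hGt : ∀ i : ℕ, 1 ≤ i → i ≤ n → t i ∈ G) :
    (P {ω | ∃ x ∈ G, c ≤ M x ω}).toReal ≤
      ∑ i ∈ Finset.Icc 1 n,
        ((∫ ω, max (M (t i) ω - ζ i) 0 ∂P) / (c - ζ i)
          - if i < n then (∫ ω, max (M (t i) ω - ζ (i+1)) 0 ∂P) / (c - ζ (i+1)) else 0) := by
  classical
  have hposint : ∀ w z : ℝ, Integrable (fun ω => max (M w ω - z) 0) P :=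
    fun w z => ((hM.integrable w).sub (integrable_const z)).pos_part
  have htmono : ∀ i j : ℕ, 1 ≤ i → i ≤ j → j ≤ n → t i ≤ t j := by
    intro i j h1 hij hjn
    rcases eq_or_lt_of_le hij with h | h
    · rw [h]
    · exact (htm i j h hjn).le
  set tt : ℕ → ℝ := fun k => if k = 0 then (-1 : ℝ) else t k with htt
  have htt1 : ∀ k : ℕ, 1 ≤ k → tt k = t k := by
    intro k hk
    show (if k = 0 then (-1:ℝ) else t k) = t k
    rw [if_neg (by omega)]
  have htt0 : tt 0 = -1 := by simp [htt]
  have httmono : ∀ k l : ℕ, k ≤ l → l ≤ n → tt k ≤ tt l := by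
    intro k l hkl hln
    rcases Nat.eq_zero_or_pos k with hk | hk
    · subst hk
      rcases Nat.eq_zero_or_pos l with hl | hl
      · subst hl; exact le_rfl
      · rw [htt0, htt1 l hl]
        have : t 1 ≤ t l := htmono 1 l le_rfl hl hln
        linarith
    · rw [htt1 k hk, htt1 l (le_trans hk hkl)]
      exact htmono k l hk hkl hln
  set Bs : ℕ → Set Ω := fun k => Bset M G c (tt k) with hBs
  have httn : ∀ k : ℕ, k ≤ n → tt k ≤ t n := by
    intro k hk
    have := httmono k n hk le_rfl
    rwa [htt1 n hn] at this
  have hBsm0 : ∀ k : ℕ, k ≤ n → MeasurableSet (Bs k) :=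
    fun k hk => 𝓕.le (t n) _ (Bset_mble hM.stronglyAdapted.adapted G c (httn k hk))
  have hBseq : ∀ k : ℕ, 1 ≤ k → Bs k = Bset M G c (t k) := by
    intro k hk
    rw [show Bs k = Bset M G c (tt k) from rfl, htt1 k hk]
  have hBsF : ∀ k : ℕ, 1 ≤ k → MeasurableSet[𝓕 (t k)] (Bs k) := by
    intro k hk
    rw [hBseq k hk]
    exact Bset_mble hM.stronglyAdapted.adapted G c le_rfl
  have hBsanti : ∀ k l : ℕ, k ≤ l → l ≤ n → Bs l ⊆ Bs k :=
    fun k l hkl hln => Bset_anti M G c (httmono k l hkl hln)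
  set a : ℕ → ℝ := fun i => (∫ ω, max (M (t i) ω - ζ i) 0 ∂P) / (c - ζ i) with ha
  set b : ℕ → ℝ := fun i => (∫ ω, max (M (t i) ω - ζ (i+1)) 0 ∂P) / (c - ζ (i+1)) with hb
  have key : ∀ j k : ℕ, k + 1 + j = n →
      (P (Bs k \ Bs n)).toReal ≤
        (∫ ω in Bs k, max (M (t (k+1)) ω - ζ (k+1)) 0 ∂P) / (c - ζ (k+1))
        + (∑ i ∈ Finset.Ioc (k+1) n, (a i - if i < n then b i else 0)
        - (if k+1 < n then b (k+1) else 0)) := by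
    intro j
    induction j with
    | zero =>
      intro k hk
      have hkn : k + 1 = n := by omega
      subst hkn
      have hd : (0:ℝ) < c - ζ (k+1) := sub_pos.mpr (hζc (k+1) (by omega) le_rfl)
      have hcr := crossing hM (P := P) G (hζc (k+1) (by omega) le_rfl)
        (httn k (by omega))
      have hBsn : Bs (k+1) = Bset M G c (t (k+1)) := hBseq (k+1) (by omega)
      have hmono : ∫ ω in Bs k \ Bs (k+1), max (M (t (k+1)) ω - ζ (k+1)) 0 ∂P
          ≤ ∫ ω in Bs k, max (M (t (k+1)) ω - ζ (k+1)) 0 ∂P := by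
        refine setIntegral_mono_set (hposint (t (k+1)) (ζ (k+1))).integrableOn
          (Eventually.of_forall fun ω => le_max_right _ _)
          (HasSubset.Subset.eventuallyLE diff_subset)
      simp only [Finset.Ioc_self, Finset.sum_empty, lt_self_iff_false, if_false, sub_zero,
        add_zero, zero_sub, neg_zero]
      rw [le_div_iff₀ hd]
      have hcr2 : (c - ζ (k+1)) * (P (Bs k \ Bs (k+1))).toReal
          ≤ ∫ ω in Bs k \ Bs (k+1), max (M (t (k+1)) ω - ζ (k+1)) 0 ∂P := by
        rw [hBsn]; exact hcr
      calc (P (Bs k \ Bs (k+1))).toReal * (c - ζ (k+1))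
          = (c - ζ (k+1)) * (P (Bs k \ Bs (k+1))).toReal := by rw [mul_comm]
        _ ≤ ∫ ω in Bs k \ Bs (k+1), max (M (t (k+1)) ω - ζ (k+1)) 0 ∂P := hcr2
        _ ≤ ∫ ω in Bs k, max (M (t (k+1)) ω - ζ (k+1)) 0 ∂P := hmono
    | succ j ih =>
      intro k hk
      have hk1n : k + 1 < n := by omega
      have hk2n : k + 2 ≤ n := by omega
      have ih2 := ih (k+1) (by omega)
      have hd1 : (0:ℝ) < c - ζ (k+1) := sub_pos.mpr (hζc (k+1) (by omega) (by omega))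
      have hd2 : (0:ℝ) < c - ζ (k+2) := sub_pos.mpr (hζc (k+2) (by omega) hk2n)
      have hsub21 : Bs (k+1) ⊆ Bs k := hBsanti k (k+1) (by omega) (by omega)
      have hsubn2 : Bs n ⊆ Bs (k+1) := hBsanti (k+1) n (by omega) le_rfl
      have hsetsplit : Bs k \ Bs n = (Bs k \ Bs (k+1)) ∪ (Bs (k+1) \ Bs n) :=
        (Set.diff_union_diff_cancel hsub21 hsubn2).symm
      have hdisj2 : Disjoint (Bs k \ Bs (k+1)) (Bs (k+1) \ Bs n) :=
        Set.disjoint_left.mpr fun ω h1 h2 => h1.2 h2.1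
      have hPadd : (P (Bs k \ Bs n)).toReal
          = (P (Bs k \ Bs (k+1))).toReal + (P (Bs (k+1) \ Bs n)).toReal := by
        rw [hsetsplit, measure_union hdisj2 ((hBsm0 (k+1) (by omega)).diff (hBsm0 n le_rfl)),
          ENNReal.toReal_add (measure_ne_top _ _) (measure_ne_top _ _)]
      have hcross : (c - ζ (k+1)) * (P (Bs k \ Bs (k+1))).toReal
          ≤ ∫ ω in Bs k \ Bs (k+1), max (M (t (k+1)) ω - ζ (k+1)) 0 ∂P := by
        rw [show Bs (k+1) = Bset M G c (t (k+1)) from hBseq (k+1) (by omega)]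
        exact crossing hM (P := P) G (hζc (k+1) (by omega) (by omega))
          ((httmono k (k+1) (by omega) (by omega)).trans (htt1 (k+1) (by omega)).le)
      have hXsplit : ∫ ω in Bs k, max (M (t (k+1)) ω - ζ (k+1)) 0 ∂P
          = (∫ ω in Bs k \ Bs (k+1), max (M (t (k+1)) ω - ζ (k+1)) 0 ∂P)
            + ∫ ω in Bs (k+1), max (M (t (k+1)) ω - ζ (k+1)) 0 ∂P := by
        rw [← MeasureTheory.setIntegral_union disjoint_sdiff_self_left (hBsm0 (k+1) (by omega))
          ((hposint _ _).integrableOn) ((hposint _ _).integrableOn),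
          Set.diff_union_of_subset hsub21]
      have hcompl : ∫ ω in (Bs (k+1))ᶜ, max (M (t (k+1)) ω - ζ (k+2)) 0 ∂P
          ≤ ∫ ω in (Bs (k+1))ᶜ, max (M (t (k+2)) ω - ζ (k+2)) 0 ∂P :=
        pospart_setIntegral_le hM (htmono (k+1) (k+2) (by omega) (by omega) hk2n)
          ((hBsF (k+1) (by omega)).compl)
      have hac1 : (∫ ω in Bs (k+1), max (M (t (k+1)) ω - ζ (k+2)) 0 ∂P)
          + ∫ ω in (Bs (k+1))ᶜ, max (M (t (k+1)) ω - ζ (k+2)) 0 ∂P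
          = ∫ ω, max (M (t (k+1)) ω - ζ (k+2)) 0 ∂P :=
        integral_add_compl (hBsm0 (k+1) (by omega)) (hposint _ _)
      have hac2 : (∫ ω in Bs (k+1), max (M (t (k+2)) ω - ζ (k+2)) 0 ∂P)
          + ∫ ω in (Bs (k+1))ᶜ, max (M (t (k+2)) ω - ζ (k+2)) 0 ∂P
          = ∫ ω, max (M (t (k+2)) ω - ζ (k+2)) 0 ∂P :=
        integral_add_compl (hBsm0 (k+1) (by omega)) (hposint _ _)
      have hI2 : ∫ ω in Bs (k+1), max (M (t (k+2)) ω - ζ (k+2)) 0 ∂P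
          ≤ (∫ ω, max (M (t (k+2)) ω - ζ (k+2)) 0 ∂P)
            - (∫ ω, max (M (t (k+1)) ω - ζ (k+2)) 0 ∂P)
            + ∫ ω in Bs (k+1), max (M (t (k+1)) ω - ζ (k+2)) 0 ∂P := by
        linarith
      have hY2X2 : (∫ ω in Bs (k+1), max (M (t (k+1)) ω - ζ (k+2)) 0 ∂P) / (c - ζ (k+2))
          ≤ (∫ ω in Bs (k+1), max (M (t (k+1)) ω - ζ (k+1)) 0 ∂P) / (c - ζ (k+1)) := by
        rw [div_le_div_iff₀ hd2 hd1, ← integral_mul_const, ← integral_mul_const]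
        refine setIntegral_mono_on ((hposint _ _).mul_const _).integrableOn
          ((hposint _ _).mul_const _).integrableOn (hBsm0 (k+1) (by omega)) fun ω hω => ?_
        have hωB : ω ∈ Bset M G c (t (k+1)) := by
          rw [← hBseq (k+1) (by omega)]; exact hω
        have hMlt : M (t (k+1)) ω < c :=
          hωB (t (k+1)) (hGt (k+1) (by omega) (by omega)) le_rfl
        exact pos_compare hMlt (hζmono (k+1) (k+2) (by omega) (by omega) hk2n)
          (hζc (k+2) (by omega) hk2n)
      have hIoc : ∑ i ∈ Finset.Ioc (k+1) n, (a i - if i < n then b i else 0)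
          = (a (k+2) - if k+2 < n then b (k+2) else 0)
            + ∑ i ∈ Finset.Ioc (k+2) n, (a i - if i < n then b i else 0) := by
        rw [← Finset.Icc_add_one_left_eq_Ioc (k+1) n, show k+1+1 = k+2 from rfl, Finset.Icc_eq_cons_Ioc hk2n, Finset.sum_cons]
      have hp : (P (Bs k \ Bs (k+1))).toReal
          ≤ (∫ ω in Bs k \ Bs (k+1), max (M (t (k+1)) ω - ζ (k+1)) 0 ∂P) / (c - ζ (k+1)) := by
        rw [le_div_iff₀ hd1]; linarith
      have hI2d : (∫ ω in Bs (k+1), max (M (t (k+2)) ω - ζ (k+2)) 0 ∂P) / (c - ζ (k+2))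
          ≤ ((∫ ω, max (M (t (k+2)) ω - ζ (k+2)) 0 ∂P)
            - (∫ ω, max (M (t (k+1)) ω - ζ (k+2)) 0 ∂P)
            + ∫ ω in Bs (k+1), max (M (t (k+1)) ω - ζ (k+2)) 0 ∂P) / (c - ζ (k+2)) :=
        (div_le_div_iff_of_pos_right hd2).mpr hI2
      have heq2 : ((∫ ω, max (M (t (k+2)) ω - ζ (k+2)) 0 ∂P)
            - (∫ ω, max (M (t (k+1)) ω - ζ (k+2)) 0 ∂P)
            + ∫ ω in Bs (k+1), max (M (t (k+1)) ω - ζ (k+2)) 0 ∂P) / (c - ζ (k+2))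
          = (∫ ω, max (M (t (k+2)) ω - ζ (k+2)) 0 ∂P) / (c - ζ (k+2))
            - (∫ ω, max (M (t (k+1)) ω - ζ (k+2)) 0 ∂P) / (c - ζ (k+2))
            + (∫ ω in Bs (k+1), max (M (t (k+1)) ω - ζ (k+2)) 0 ∂P) / (c - ζ (k+2)) := by
        ring
      have hXd : (∫ ω in Bs k, max (M (t (k+1)) ω - ζ (k+1)) 0 ∂P) / (c - ζ (k+1))
          = (∫ ω in Bs k \ Bs (k+1), max (M (t (k+1)) ω - ζ (k+1)) 0 ∂P) / (c - ζ (k+1))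
            + (∫ ω in Bs (k+1), max (M (t (k+1)) ω - ζ (k+1)) 0 ∂P) / (c - ζ (k+1)) := by
        rw [hXsplit]; ring
      have haA : a (k+2) = (∫ ω, max (M (t (k+2)) ω - ζ (k+2)) 0 ∂P) / (c - ζ (k+2)) := rfl
      have hbY : b (k+1) = (∫ ω, max (M (t (k+1)) ω - ζ (k+2)) 0 ∂P) / (c - ζ (k+2)) := rfl
      rw [hPadd, hIoc, if_pos hk1n]
      linarith [ih2]
  have h0 : Bs 0 = univ := by
    ext ω
    simp only [Set.mem_univ, iff_true]
    intro y hy hle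
    rw [show tt 0 = (-1:ℝ) from htt0] at hle
    exact absurd (hG0 y hy) (by linarith)
  have hset : {ω | ∃ x ∈ G, c ≤ M x ω} = Bs 0 \ Bs n := by
    rw [h0]
    ext ω
    simp only [Set.mem_setOf_eq, Set.mem_diff, Set.mem_univ, true_and]
    constructor
    · rintro ⟨x, hxG, hxc⟩ hB
      have hxt : x ≤ tt n := by rw [htt1 n hn]; exact hGn x hxG
      exact absurd (hB x hxG hxt) (not_lt.mpr hxc)
    · intro hB
      by_contra hcon
      push_neg at hcon
      exact hB fun y hy _ => hcon y hy
  rw [hset]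
  have hkey := key (n - 1) 0 (by omega)
  have h0int : ∫ ω in Bs 0, max (M (t (0+1)) ω - ζ (0+1)) 0 ∂P
      = ∫ ω, max (M (t 1) ω - ζ 1) 0 ∂P := by
    rw [h0, Measure.restrict_univ]
  rw [h0int] at hkey
  refine le_trans hkey ?_
  rw [Finset.Icc_eq_cons_Ioc hn, Finset.sum_cons]
  have ha1 : a 1 = (∫ ω, max (M (t 1) ω - ζ 1) 0 ∂P) / (c - ζ 1) := rfl
  simp only [zero_add] at hkey ⊢
  rw [← ha1]
  linarith
end

/-- Martingale inequality for the maximum (simple form): for a right-continuous martingale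
`M` on `[0,1]` with `M₀ = 0`, `m > 0`, levels `ζ₁ ≤ … ≤ ζₙ < m` and a grid
`0 ≤ t₁ < … < tₙ = 1`,
`P[max_{0≤t≤1} M_t ≥ m] ≤ Σᵢ [ E[(M_{tᵢ}−ζᵢ)⁺]/(m−ζᵢ) − 1_{i<n} E[(M_{tᵢ}−ζ_{i+1})⁺]/(m−ζ_{i+1}) ]`. -/
theorem stmt_17 {Ω : Type*} [m0 : MeasurableSpace Ω] (P : Measure Ω)
    [IsProbabilityMeasure P] (𝓕 : Filtration ℝ m0)
    (M : ℝ → Ω → ℝ) (hM : Martingale M 𝓕 P)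
    (hrc : ∀ ω : Ω, ∀ t : ℝ, ContinuousWithinAt (fun u => M u ω) (Set.Ici t) t)
    (hM0 : ∀ ω, M 0 ω = 0)
    (m : ℝ) (hm : 0 < m)
    (n : ℕ) (hn : 1 ≤ n)
    (t : ℕ → ℝ) (ht1 : 0 ≤ t 1) (htn : t n = 1)
    (htm : ∀ i j : ℕ, i < j → j ≤ n → t i < t j)
    (ζ : ℕ → ℝ)
    (hζmono : ∀ i j : ℕ, 1 ≤ i → i ≤ j → j ≤ n → ζ i ≤ ζ j)
    (hζlt : ∀ i : ℕ, 1 ≤ i → i ≤ n → ζ i < m) :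
    (P {ω | m ≤ sSup ((fun u => M u ω) '' Set.Icc 0 1)}).toReal ≤
      ∑ i ∈ Finset.Icc 1 n,
        ((∫ ω, max (M (t i) ω - ζ i) 0 ∂P) / (m - ζ i)
          - if i < n then (∫ ω, max (M (t i) ω - ζ (i+1)) 0 ∂P) / (m - ζ (i+1)) else 0) := by
  classical
  have hζn : ζ n < m := hζlt n hn le_rfl
  have htmono : ∀ i j : ℕ, 1 ≤ i → i ≤ j → j ≤ n → t i ≤ t j := by
    intro i j h1 hij hjn
    rcases eq_or_lt_of_le hij with h | h
    · rw [h]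
    · exact (htm i j h hjn).le
  have main : ∀ c : ℝ, ζ n < c → c < m →
      (P {ω | m ≤ sSup ((fun u => M u ω) '' Set.Icc 0 1)}).toReal ≤
        ∑ i ∈ Finset.Icc 1 n,
          ((∫ ω, max (M (t i) ω - ζ i) 0 ∂P) / (c - ζ i)
            - if i < n then (∫ ω, max (M (t i) ω - ζ (i+1)) 0 ∂P) / (c - ζ (i+1)) else 0) := by
    intro c hc1 hc2
    -- enumeration of rationals in [0,1]
    obtain ⟨f, hf⟩ := exists_surjective_nat ℚ
    set r : ℕ → ℝ := fun k => max 0 (min 1 ((f k : ℚ) : ℝ)) with hr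
    have hr01 : ∀ k, r k ∈ Icc (0:ℝ) 1 :=
      fun k => ⟨le_max_left _ _, max_le zero_le_one (min_le_left _ _)⟩
    have hrsurj : ∀ q : ℚ, (q:ℝ) ∈ Icc (0:ℝ) 1 → ∃ k, r k = (q:ℝ) := by
      intro q hq
      obtain ⟨k, rfl⟩ := hf q
      refine ⟨k, ?_⟩
      show max 0 (min 1 ((f k : ℚ) : ℝ)) = ((f k : ℚ) : ℝ)
      rw [min_eq_right hq.2, max_eq_right hq.1]
    set T : Finset ℝ := (Finset.Icc 1 n).image t with hT
    set Gk : ℕ → Finset ℝ := fun K => T ∪ (Finset.range K).image r with hGk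
    set V : ℕ → Set Ω := fun K => {ω | ∃ x ∈ Gk K, c ≤ M x ω} with hV
    have hVmono : Monotone V := by
      intro K L hKL ω hω
      obtain ⟨x, hx, hc⟩ := hω
      refine ⟨x, ?_, hc⟩
      rcases Finset.mem_union.mp hx with h | h
      · exact Finset.mem_union.mpr (Or.inl h)
      · obtain ⟨k, hk, rfl⟩ := Finset.mem_image.mp h
        exact Finset.mem_union.mpr (Or.inr (Finset.mem_image.mpr
          ⟨k, Finset.mem_range.mpr (lt_of_lt_of_le (Finset.mem_range.mp hk) hKL), rfl⟩))
    have hmain : {ω | m ≤ sSup ((fun u => M u ω) '' Set.Icc 0 1)} ⊆ ⋃ K, V K := by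
      intro ω hω
      simp only [mem_setOf_eq] at hω
      have hne : ((fun u => M u ω) '' Set.Icc 0 1).Nonempty :=
        ⟨M 0 ω, ⟨0, ⟨le_rfl, zero_le_one⟩, rfl⟩⟩
      have hbdd : BddAbove ((fun u => M u ω) '' Set.Icc 0 1) := by
        by_contra hb
        rw [Real.sSup_of_not_bddAbove hb] at hω
        linarith
      have hlt : c < sSup ((fun u => M u ω) '' Set.Icc 0 1) := lt_of_lt_of_le hc2 hω
      obtain ⟨y, ⟨s, hs01, rfl⟩, hcy⟩ := exists_lt_of_lt_csSup hne hlt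
      rcases eq_or_lt_of_le hs01.2 with hs1 | hs1
      · -- s = 1
        obtain ⟨k, hk⟩ := hrsurj 1 (by norm_num)
        refine mem_iUnion.mpr ⟨k+1, ⟨(1:ℝ), ?_, ?_⟩⟩
        · refine Finset.mem_union.mpr (Or.inr (Finset.mem_image.mpr
            ⟨k, Finset.mem_range.mpr (by omega), by rw [hk]; norm_num⟩))
        · rw [← hs1]; exact hcy.le
      · -- s < 1, use right continuity
        have hrc2 := hrc ω s
        have hmem := hrc2 (Ioi_mem_nhds hcy)
        obtain ⟨ε, hε, hball⟩ := Metric.mem_nhdsWithin_iff.mp hmem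
        obtain ⟨q, hq1, hq2⟩ := exists_rat_btwn (show s < min (s + ε) 1 by
          simp only [lt_min_iff]; exact ⟨by linarith, hs1⟩)
        have hq01 : (q:ℝ) ∈ Icc (0:ℝ) 1 :=
          ⟨le_trans hs01.1 hq1.le, (lt_of_lt_of_le hq2 (min_le_right _ _)).le⟩
        have hqc : c < M (q:ℝ) ω := by
          refine hball ⟨?_, hq1.le⟩
          rw [Metric.mem_ball, Real.dist_eq, abs_of_pos (by linarith)]
          have := lt_of_lt_of_le hq2 (min_le_left _ _)
          linarith
        obtain ⟨k, hk⟩ := hrsurj q hq01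
        refine mem_iUnion.mpr ⟨k+1, ⟨(q:ℝ), ?_, hqc.le⟩⟩
        exact Finset.mem_union.mpr (Or.inr (Finset.mem_image.mpr
          ⟨k, Finset.mem_range.mpr (by omega), hk⟩))
    have hVle : ∀ K, (P (V K)).toReal ≤
        ∑ i ∈ Finset.Icc 1 n,
          ((∫ ω, max (M (t i) ω - ζ i) 0 ∂P) / (c - ζ i)
            - if i < n then (∫ ω, max (M (t i) ω - ζ (i+1)) 0 ∂P) / (c - ζ (i+1)) else 0) := by
      intro K
      refine discrete hM c n hn t ht1 htm ζ hζmono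
        (fun i h1 h2 => lt_of_le_of_lt (hζmono i n h1 h2 le_rfl) hc1) (Gk K) ?_ ?_ ?_
      · intro x hx
        rcases Finset.mem_union.mp hx with h | h
        · obtain ⟨i, hi, rfl⟩ := Finset.mem_image.mp h
          obtain ⟨h1, h2⟩ := Finset.mem_Icc.mp hi
          exact le_trans ht1 (htmono 1 i le_rfl h1 h2)
        · obtain ⟨k, _, rfl⟩ := Finset.mem_image.mp h
          exact (hr01 k).1
      · intro x hx
        rw [htn]
        rcases Finset.mem_union.mp hx with h | h
        · obtain ⟨i, hi, rfl⟩ := Finset.mem_image.mp h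
          obtain ⟨h1, h2⟩ := Finset.mem_Icc.mp hi
          rw [← htn]; exact htmono i n h1 h2 le_rfl
        · obtain ⟨k, _, rfl⟩ := Finset.mem_image.mp h
          exact (hr01 k).2
      · intro i h1 h2
        exact Finset.mem_union.mpr (Or.inl (Finset.mem_image.mpr
          ⟨i, Finset.mem_Icc.mpr ⟨h1, h2⟩, rfl⟩))
    have hsup : P (⋃ K, V K) = ⨆ K, P (V K) := hVmono.measure_iUnion
    have hub : P (⋃ K, V K) ≤ ENNReal.ofReal
        (∑ i ∈ Finset.Icc 1 n,
          ((∫ ω, max (M (t i) ω - ζ i) 0 ∂P) / (c - ζ i)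
            - if i < n then (∫ ω, max (M (t i) ω - ζ (i+1)) 0 ∂P) / (c - ζ (i+1)) else 0)) := by
      rw [hsup]
      refine iSup_le fun K => ?_
      rw [← ENNReal.ofReal_toReal (measure_ne_top P (V K))]
      exact ENNReal.ofReal_le_ofReal (hVle K)
    calc (P {ω | m ≤ sSup ((fun u => M u ω) '' Set.Icc 0 1)}).toReal
        ≤ (P (⋃ K, V K)).toReal :=
          ENNReal.toReal_mono (measure_ne_top _ _) (measure_mono hmain)
      _ ≤ (ENNReal.ofReal (∑ i ∈ Finset.Icc 1 n,
          ((∫ ω, max (M (t i) ω - ζ i) 0 ∂P) / (c - ζ i)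
            - if i < n then (∫ ω, max (M (t i) ω - ζ (i+1)) 0 ∂P) / (c - ζ (i+1)) else 0))).toReal :=
          ENNReal.toReal_mono ENNReal.ofReal_ne_top hub
      _ ≤ _ := by
          rw [ENNReal.toReal_ofReal (le_trans ENNReal.toReal_nonneg (hVle 0))]
  -- limit c → m⁻
  have htendsto : Tendsto (fun c : ℝ => ∑ i ∈ Finset.Icc 1 n,
      ((∫ ω, max (M (t i) ω - ζ i) 0 ∂P) / (c - ζ i)
        - if i < n then (∫ ω, max (M (t i) ω - ζ (i+1)) 0 ∂P) / (c - ζ (i+1)) else 0))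
      (𝓝[<] m) (𝓝 (∑ i ∈ Finset.Icc 1 n,
      ((∫ ω, max (M (t i) ω - ζ i) 0 ∂P) / (m - ζ i)
        - if i < n then (∫ ω, max (M (t i) ω - ζ (i+1)) 0 ∂P) / (m - ζ (i+1)) else 0))) := by
    refine Tendsto.mono_left ?_ nhdsWithin_le_nhds
    refine tendsto_finset_sum _ fun i hi => ?_
    obtain ⟨h1, h2⟩ := Finset.mem_Icc.mp hi
    refine Tendsto.sub ?_ ?_
    · exact (continuousAt_const.div (continuousAt_id.sub continuousAt_const)
        (sub_ne_zero.mpr (hζlt i h1 h2).ne')).tendsto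
    · by_cases h : i < n
      · simp only [if_pos h]
        exact (continuousAt_const.div (continuousAt_id.sub continuousAt_const)
          (sub_ne_zero.mpr (hζlt (i+1) (by omega) h).ne')).tendsto
      · simp only [if_neg h]
        exact tendsto_const_nhds
  refine ge_of_tendsto htendsto ?_
  filter_upwards [Ioo_mem_nhdsLT_of_mem (show m ∈ Ioc (ζ n) m from ⟨hζn, le_rfl⟩)] with c hc
  exact main c hc.1 hc.2
end
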